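/- arXiv:2504.07270 — 2 statements merged into one kernel-verified Lean document; each statement's English description precedes it below -/
import Mathlib

section
/- Let p : ℂ[X] be the cubic polynomial z^3 + a*z + b where a is real and b is a positive real. Then p has no purely imaginary roots (including 0), and exactly one of its three roots (counted with multiplicity) has negative real part. -/
/-!
The real cubic `x ^ 3 + a x + b` is positive at `0` and tends to `-∞`, so it has a root `r < 0`.
Dividing it out leaves the real quadratic `z ^ 2 + r z + (r ^ 2 + a)`, whose constant term is
`-b / r > 0` and whose roots sum to `-r > 0`; such a quadratic has both roots in the open right
half-plane, whether they are real (same sign, positive sum) or conjugate (real part `-r / 2`).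
-/

open Polynomial

theorem exists_neg_root_of_cubic {a b : ℝ} (hb : 0 < b) : ∃ r < 0, r ^ 3 + a * r + b = 0 := by
  obtain ⟨M, hM⟩ : ∃ M, M = 1 + |a| + b := ⟨_, rfl⟩
  have hM1 : 1 ≤ M := by rw [hM]; linarith [abs_nonneg a]
  have hMneg : (-M) ^ 3 + a * -M + b ≤ 0 := by
    nlinarith [neg_abs_le a, mul_le_mul_of_nonneg_left hM1 (by positivity : (0 : ℝ) ≤ M * M)]
  obtain ⟨r, hrI, hr⟩ := intermediate_value_Icc (show -M ≤ 0 by linarith)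
    (by fun_prop : Continuous fun x : ℝ => x ^ 3 + a * x + b).continuousOn
    ⟨hMneg, by simpa using hb.le⟩
  refine ⟨r, lt_of_le_of_ne hrI.2 ?_, hr⟩
  rintro rfl
  linarith

theorem cubic_eq_X_sub_C_mul {R : Type*} [CommRing R] {a b r : R} (h : r ^ 3 + a * r + b = 0) :
    X ^ 3 + C a * X + C b = (X - C r) * (X ^ 2 + C r * X + C (r ^ 2 + a)) := by
  rw [eq_neg_of_add_eq_zero_right h]
  simp only [map_neg, map_add, map_mul, map_pow]
  ring

theorem Complex.re_pos_of_sq_add_mul_add_eq_zero {β γ : ℝ} (hβ : β < 0) (hγ : 0 < γ) {w : ℂ}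
    (hw : w ^ 2 + β * w + γ = 0) : 0 < w.re := by
  have hre := congrArg Complex.re hw
  have him := congrArg Complex.im hw
  simp only [sq, add_re, mul_re, ofReal_re, ofReal_im, zero_mul, sub_zero, zero_re, add_im,
    mul_im, add_zero, zero_im] at hre him
  rcases mul_eq_zero.mp (show w.im * (2 * w.re + β) = 0 by linarith) with hreal | hsum
  · rw [hreal] at hre
    nlinarith
  · linarith

/-- The cubic `z^3 + a z + b` with `a` real and `b > 0` real has no purely imaginary
roots (including `0`), and exactly one of its three roots (with multiplicity) has
negative real part. -/
theorem stmt_0 (a b : ℝ) (hb : 0 < b)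
    (p : Polynomial ℂ) (hp : p = X ^ 3 + C (a : ℂ) * X + C (b : ℂ)) :
    (∀ z ∈ p.roots, z.re ≠ 0) ∧
      (p.roots.filter (fun z => z.re < 0)).card = 1 := by
  obtain ⟨r, hr, hroot⟩ := exists_neg_root_of_cubic (a := a) hb
  have hc : 0 < r ^ 2 + a := by nlinarith
  set Q : ℂ[X] := X ^ 2 + C (r : ℂ) * X + C ((r : ℂ) ^ 2 + a)
  have hQ : Q ≠ 0 := Monic.ne_zero (by simp only [Q]; monicity!)
  have hroots : p.roots = (r : ℂ) ::ₘ Q.roots := by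
    rw [hp, cubic_eq_X_sub_C_mul (r := (r : ℂ)) (by exact_mod_cast hroot),
      roots_mul (mul_ne_zero (X_sub_C_ne_zero _) hQ), roots_X_sub_C, Multiset.singleton_add]
  have hQ_re_pos : ∀ w ∈ Q.roots, 0 < w.re := fun w hw ↦ by
    refine Complex.re_pos_of_sq_add_mul_add_eq_zero hr hc ?_
    simpa [Q] using (mem_roots hQ).mp hw
  rw [hroots, Multiset.filter_cons_of_pos _ (by simpa using hr),
    Multiset.filter_eq_nil.mpr fun w hw ↦ (hQ_re_pos w hw).not_gt]
  refine ⟨?_, rfl⟩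
  intro z hz
  rcases Multiset.mem_cons.mp hz with rfl | hz
  · simpa using hr.ne
  · exact (hQ_re_pos z hz).ne'
end

section
/- Let z₁ ∈ ℂ with z₁ ≠ 0, and let α̂, Ω, V be reals with Ω²/V² − α̂² > 0. Then the 5×5 matrix with columns (0,0,1,0,0)ᵀ, (0,0,0,0,1)ᵀ, (1, z₁, z₁², 0, 0)ᵀ, (0, 1, 2z₁, 0, 0)ᵀ, (−α̂, 0, 0, sqrt(Ω²/V² − α̂²), 0)ᵀ is invertible. -/
open Real Matrix

theorem det_transversalityMatrix {R : Type*} [CommRing R] (z a s : R) :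
    (Matrix.of ![![0, 0, 1, 0, -a], ![0, 0, z, 1, 0], ![1, 0, z ^ 2, 2 * z, 0],
      ![0, 0, 0, 0, s], ![0, 1, 0, 0, 0]] : Matrix (Fin 5) (Fin 5) R).det = -s := by
  simp [det_succ_row_zero, Fin.sum_univ_succ, Fin.succAbove]

theorem stmt_8_general (z₁ : ℂ)
    (Ω V αh : ℝ) (hpos : 0 < Ω ^ 2 / V ^ 2 - αh ^ 2)
    (s : ℝ) (hs : s = Real.sqrt (Ω ^ 2 / V ^ 2 - αh ^ 2))
    (T : Matrix (Fin 5) (Fin 5) ℂ)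
    (hT : T = Matrix.of
      ![![0, 0, 1, 0, (-αh : ℂ)],
        ![0, 0, z₁, 1, 0],
        ![1, 0, z₁ ^ 2, 2 * z₁, 0],
        ![0, 0, 0, 0, (s : ℂ)],
        ![0, 1, 0, 0, 0]]) :
    IsUnit T := by
  have hs_ne : s ≠ 0 := hs ▸ Real.sqrt_ne_zero'.mpr hpos
  rw [isUnit_iff_isUnit_det, hT, det_transversalityMatrix, isUnit_iff_ne_zero, neg_ne_zero]
  exact_mod_cast hs_ne

/-- Degenerate (repeated eigenvalue) case of the transversality computation: the 5×5
matrix with columns `b₁, b₂`, the eigenvector `(1, z₁, z₁², 0, 0)`, the generalized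
eigenvector `(0, 1, 2z₁, 0, 0)`, and `e_α` is invertible. -/
theorem stmt_8 (z₁ : ℂ) (hz₁ : z₁ ≠ 0)
    (Ω V αh : ℝ) (hpos : 0 < Ω ^ 2 / V ^ 2 - αh ^ 2)
    (s : ℝ) (hs : s = Real.sqrt (Ω ^ 2 / V ^ 2 - αh ^ 2))
    (T : Matrix (Fin 5) (Fin 5) ℂ)
    (hT : T = Matrix.of
      ![![0, 0, 1, 0, (-αh : ℂ)],
        ![0, 0, z₁, 1, 0],
        ![1, 0, z₁ ^ 2, 2 * z₁, 0],
        ![0, 0, 0, 0, (s : ℂ)],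
        ![0, 1, 0, 0, 0]]) :
    IsUnit T :=
  stmt_8_general z₁ Ω V αh hpos s hs T hT
end
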